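/- Assume b₁, …, b₅ are pairwise distinct complex numbers. Let ι : ℂ[x, y₇] → ℂ[x, y₇, y₈] be the canonical inclusion of polynomial rings. Then the preimage (Ideal.comap ι) of the ideal generated by f₁₄, f₁₅, f₁₆ is the principal ideal of ℂ[x, y₇] generated by y₇³ − k₃(x)k₂(x)². -/

import Mathlib

open MvPolynomial

/-- `k₃(x) = (x−b₁)(x−b₂)(x−b₃)` in `ℂ[x,y₇,y₈]` (variables `X 0 = x`, `X 1 = y₇`, `X 2 = y₈`). -/
noncomputable def k3X4 (b : Fin 5 → ℂ) : MvPolynomial (Fin 3) ℂ :=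
  (X 0 - C (b 0)) * (X 0 - C (b 1)) * (X 0 - C (b 2))

/-- `k₂(x) = (x−b₄)(x−b₅)` in `ℂ[x,y₇,y₈]`. -/
noncomputable def k2X4 (b : Fin 5 → ℂ) : MvPolynomial (Fin 3) ℂ :=
  (X 0 - C (b 3)) * (X 0 - C (b 4))

/-- `k₃(x)` in `ℂ[x,y₇]` (variables `X 0 = x`, `X 1 = y₇`). -/
noncomputable def k3X6 (b : Fin 5 → ℂ) : MvPolynomial (Fin 2) ℂ :=
  (X 0 - C (b 0)) * (X 0 - C (b 1)) * (X 0 - C (b 2))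

/-- `k₂(x)` in `ℂ[x,y₇]`. -/
noncomputable def k2X6 (b : Fin 5 → ℂ) : MvPolynomial (Fin 2) ℂ :=
  (X 0 - C (b 3)) * (X 0 - C (b 4))

/-!
If `c(x) = k₃(x)k₂(x)² ≠ 0` and `s³ = c(x)`, then `(x, s, s²/k₂(x))` is a common zero of
`f₁₄, f₁₅, f₁₆`, so every `p` in the preimage vanishes on the curve `y₇³ = c(x)` away from the
finitely many roots of `c`. Viewing `p` in `ℂ[x][y₇]` and dividing by the monic `y₇³ − c`, the
remainder has `y₇`-degree `< 3` yet vanishes at the three distinct cube roots of `c(x)` for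
infinitely many `x`, so it is zero. Conversely `y₇³ − k₃k₂² = y₇ f₁₄ + k₂ f₁₅`.
-/

namespace Polynomial

lemma eq_zero_of_natDegree_lt_of_eval_nthRoots {K : Type*} [CommRing K] [IsDomain K] {n : ℕ}
    {ζ : K} (hζ : IsPrimitiveRoot ζ n) {a : K} (ha : a ≠ 0) (hroot : ∃ α, α ^ n = a) {p : K[X]}
    (hp : p.natDegree < n) (heval : ∀ s, s ^ n = a → p.eval s = 0) : p = 0 := by
  classical
  have hn : 0 < n := Nat.zero_lt_of_lt hp
  refine eq_zero_of_natDegree_lt_card_of_eval_eq_zero' p (nthRoots n a).toFinset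
    (fun s hs => heval s ((mem_nthRoots hn).mp (Multiset.mem_toFinset.mp hs))) ?_
  rwa [Multiset.toFinset_card_of_nodup (hζ.nthRoots_nodup ha), hζ.card_nthRoots, if_pos hroot]

theorem X_pow_sub_C_dvd_of_evalEval_eq_zero {K : Type*} [Field K] [IsAlgClosed K] {n : ℕ}
    (hn : n ≠ 0) {ζ : K} (hζ : IsPrimitiveRoot ζ n) {c : K[X]} (hc : c ≠ 0) {P : K[X][X]}
    (hP : ∀ x s, c.eval x ≠ 0 → s ^ n = c.eval x → P.evalEval x s = 0) :
    X ^ n - C c ∣ P := by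
  have hG : (X ^ n - C c : K[X][X]).Monic := monic_X_pow_sub_C c hn
  have hG1 : (X ^ n - C c : K[X][X]) ≠ 1 := fun h =>
    hn (by simpa [natDegree_X_pow_sub_C] using congr_arg natDegree h)
  rw [← modByMonic_eq_zero_iff_dvd hG]
  set R := P %ₘ (X ^ n - C c)
  have hRdeg : R.natDegree < n := by
    simpa [natDegree_X_pow_sub_C] using natDegree_modByMonic_lt P hG hG1
  have hR : ∀ x s, c.eval x ≠ 0 → s ^ n = c.eval x → R.evalEval x s = 0 := by
    intro x s hx hs
    simp [R, modByMonic_eq_sub_mul_div, hP x s hx hs, hs, evalEval_C]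
  ext i : 1
  refine eq_zero_of_infinite_isRoot _
    ((finite_setOfPred_isRoot hc).infinite_compl.mono fun x hx => ?_)
  have hRx : R.map (evalRingHom x) = 0 :=
    eq_zero_of_natDegree_lt_of_eval_nthRoots hζ hx (IsAlgClosed.exists_pow_nat_eq _ hn.bot_lt)
      (natDegree_map_le.trans_lt hRdeg) fun s hs => by rw [map_evalRingHom_eval, hR x s hx hs]
  simpa using congr_arg (coeff · i) hRx

end Polynomial

lemma MvPolynomial.aeval_eq_evalEval_equivMvPolynomial_symm {R : Type*} [CommSemiring R]
    (p : MvPolynomial (Fin 2) R) (x y : R) :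
    aeval ![x, y] p = ((Polynomial.Bivariate.equivMvPolynomial R).symm p).evalEval x y := by
  rw [← Polynomial.coe_aevalAeval_eq_evalEval]
  show _ = ((Polynomial.aevalAeval x y).comp
    (Polynomial.Bivariate.equivMvPolynomial R).symm.toAlgHom) p
  congr 1
  ext i
  fin_cases i <;> simp

section

variable (b : Fin 5 → ℂ)

noncomputable def k3k2Sq : Polynomial ℂ :=
  (Polynomial.X - Polynomial.C (b 0)) * (Polynomial.X - Polynomial.C (b 1)) *
    (Polynomial.X - Polynomial.C (b 2)) *
    ((Polynomial.X - Polynomial.C (b 3)) * (Polynomial.X - Polynomial.C (b 4))) ^ 2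

lemma k3k2Sq_ne_zero : k3k2Sq b ≠ 0 := by
  simp [k3k2Sq, Polynomial.X_sub_C_ne_zero]

lemma equivMvPolynomial_symm_X_one_pow_three_sub :
    (Polynomial.Bivariate.equivMvPolynomial ℂ).symm
        (X 1 ^ 3 - k3X6 b * k2X6 b ^ 2 : MvPolynomial (Fin 2) ℂ) =
      Polynomial.X ^ 3 - Polynomial.C (k3k2Sq b) := by
  simp [k3X6, k2X6, k3k2Sq]

noncomputable def idealX4 : Ideal (MvPolynomial (Fin 3) ℂ) :=
  Ideal.span {X 1 ^ 2 - X 2 * k2X4 b, X 1 * X 2 - k2X4 b * k3X4 b, X 2 ^ 2 - X 1 * k3X4 b}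

lemma X_one_pow_three_sub_mem_idealX4 : X 1 ^ 3 - k3X4 b * k2X4 b ^ 2 ∈ idealX4 b := by
  have h : (X 1 ^ 3 - k3X4 b * k2X4 b ^ 2 : MvPolynomial (Fin 3) ℂ) =
      X 1 * (X 1 ^ 2 - X 2 * k2X4 b) + k2X4 b * (X 1 * X 2 - k2X4 b * k3X4 b) := by ring
  rw [h]
  exact Ideal.add_mem _ (Ideal.mul_mem_left _ _ (Ideal.subset_span (by simp)))
    (Ideal.mul_mem_left _ _ (Ideal.subset_span (by simp)))

variable {b}

lemma idealX4_le_ker_aeval {x s : ℂ} (hκ : (x - b 3) * (x - b 4) ≠ 0)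
    (hs : s ^ 3 = (x - b 0) * (x - b 1) * (x - b 2) * ((x - b 3) * (x - b 4)) ^ 2) :
    idealX4 b ≤ RingHom.ker (aeval ![x, s, s ^ 2 / ((x - b 3) * (x - b 4))]) := by
  rw [idealX4, Ideal.span_le]
  rintro q (rfl | rfl | rfl) <;> simp only [k2X4, k3X4, SetLike.mem_coe,
    RingHom.mem_ker, aeval_eq_eval, map_sub, map_mul, map_pow, eval_X, eval_C, Matrix.cons_val_zero,
    Matrix.cons_val_one, Matrix.cons_val]
  · rw [div_mul_cancel₀ _ hκ, sub_self]
  · rw [sub_eq_zero, mul_div_assoc', div_eq_iff hκ]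
    linear_combination hs
  · rw [sub_eq_zero, div_pow, div_eq_iff (pow_ne_zero 2 hκ)]
    linear_combination s * hs

lemma aeval_eq_zero_of_aeval_mem_idealX4 {p : MvPolynomial (Fin 2) ℂ}
    (hp : aeval ![X 0, X 1] p ∈ idealX4 b) {x s : ℂ} (hx : (k3k2Sq b).eval x ≠ 0)
    (hs : s ^ 3 = (k3k2Sq b).eval x) : aeval ![x, s] p = 0 := by
  have hκ : (x - b 3) * (x - b 4) ≠ 0 := by
    intro h
    simp [k3k2Sq, h] at hx
  have hs' : s ^ 3 = (x - b 0) * (x - b 1) * (x - b 2) * ((x - b 3) * (x - b 4)) ^ 2 := by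
    simpa [k3k2Sq] using hs
  have hcomp : aeval ![x, s] p =
      aeval ![x, s, s ^ 2 / ((x - b 3) * (x - b 4))]
        (aeval (![X 0, X 1] : Fin 2 → MvPolynomial (Fin 3) ℂ) p) := by
    rw [← AlgHom.comp_apply, comp_aeval]
    congr 2
    ext i
    fin_cases i <;> simp
  rw [hcomp]
  exact idealX4_le_ker_aeval hκ hs' hp

end

theorem comap_ideal_X4_to_X6 (b : Fin 5 → ℂ) :
    Ideal.comap
        ((MvPolynomial.aeval (![X 0, X 1] : Fin 2 → MvPolynomial (Fin 3) ℂ) :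
          MvPolynomial (Fin 2) ℂ →ₐ[ℂ] MvPolynomial (Fin 3) ℂ).toRingHom)
        (Ideal.span {(X 1 : MvPolynomial (Fin 3) ℂ) ^ 2 - X 2 * k2X4 b,
          X 1 * X 2 - k2X4 b * k3X4 b,
          (X 2) ^ 2 - X 1 * k3X4 b}) =
      Ideal.span {(X 1 : MvPolynomial (Fin 2) ℂ) ^ 3 - k3X6 b * (k2X6 b) ^ 2} := by
  change Ideal.comap _ (idealX4 b) = _
  refine le_antisymm (fun p hp => ?_) ?_
  · rw [Ideal.mem_span_singleton, ← map_dvd_iff (Polynomial.Bivariate.equivMvPolynomial ℂ).symm,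
      equivMvPolynomial_symm_X_one_pow_three_sub]
    refine Polynomial.X_pow_sub_C_dvd_of_evalEval_eq_zero three_ne_zero
      (Complex.isPrimitiveRoot_exp 3 three_ne_zero) (k3k2Sq_ne_zero b) fun x s hx hs => ?_
    rw [← aeval_eq_evalEval_equivMvPolynomial_symm]
    exact aeval_eq_zero_of_aeval_mem_idealX4 hp hx hs
  · rw [Ideal.span_le, Set.singleton_subset_iff, SetLike.mem_coe, Ideal.mem_comap]
    convert X_one_pow_three_sub_mem_idealX4 b using 1
    simp [k3X6, k2X6, k3X4, k2X4]
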